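/- arXiv:2503.23703 — 2 statements merged into one kernel-verified Lean document; each statement's English description precedes it below -/
import Mathlib

section
/- A tropical linear differential equation P = min_{0≤i≤k}{a_i + u^(i)} (with a_0,...,a_k ∈ ℤ, k ≥ 1) has no nonempty tropical solution if and only if a_i - i > a_0 for all 1 ≤ i ≤ k. -/
/-- `tval S i` = min { s - i : s ∈ S, s ≥ i }, as an extended real (⊤ if no such s). -/
noncomputable def tval (S : Set ℕ) (i : ℕ) : EReal :=
  ⨅ (d : ℕ) (_ : i + d ∈ S), ((d : ℝ) : EReal)

/-- The term `a_i + val_S(i)` of the tropical linear differential equation. -/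
noncomputable def tterm (a : ℕ → ℤ) (S : Set ℕ) (i : ℕ) : EReal :=
  ((a i : ℝ) : EReal) + tval S i

/-- `min_{0 ≤ i ≤ k} { a_i + val_S(i) }`. -/
noncomputable def tmin (k : ℕ) (a : ℕ → ℤ) (S : Set ℕ) : EReal :=
  ⨅ i ∈ Finset.range (k + 1), tterm a S i

/-- `S` is a tropical solution: the minimum is attained at least twice
(this also covers the case where the minimum is `∞`, since `k ≥ 1`). -/
def IsSol (k : ℕ) (a : ℕ → ℤ) (S : Set ℕ) : Prop :=
  ∃ i ∈ Finset.range (k + 1), ∃ j ∈ Finset.range (k + 1),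
    i ≠ j ∧ tterm a S i = tmin k a S ∧ tterm a S j = tmin k a S

/-- A minimal tropical solution: nonempty, a solution, and no nonempty proper
subset is a solution. -/
def IsMinSol (k : ℕ) (a : ℕ → ℤ) (S : Set ℕ) : Prop :=
  S.Nonempty ∧ IsSol k a S ∧ ∀ T ⊆ S, T.Nonempty → IsSol k a T → T = S

/-!
Write `b i = a i - i`. If `b 0 < b i` for `1 ≤ i ≤ k` and `m = min S`, then the term
`a 0 + m` is strictly below every other term `a i + val_S(i) ≥ b i + m`, so the minimum is
attained only once.

Conversely, let `j` be the least index `≥ 1` with `b j ≤ b 0`. If `b j = b 0`, then `S = {j}`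
is a solution, the minimum `b 0 + j` being attained at `0` and `j`. If `b j < b 0`, put
`p = j - 1` and `S = {p, x}`: the indices `i ≤ p` contribute `b i + p ≥ a 0 + p`, attained at
`0`, and the indices `p < i ≤ x` contribute `b i + x`. Taking `x` to be the largest of the values
`a 0 + p - b i` that are `≥ i` makes all of the latter `≥ a 0 + p`, with equality somewhere.
-/

section Valuation

variable {S : Set ℕ} {i : ℕ}

lemma tval_le {s : ℕ} (hs : s ∈ S) (his : i ≤ s) : tval S i ≤ (((s : ℝ) - i : ℝ) : EReal) := by
  have hmem : i + (s - i) ∈ S := by rwa [Nat.add_sub_cancel' his]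
  refine (iInf₂_le (s - i) hmem).trans ?_
  rw [Nat.cast_sub his]

lemma le_tval {m : ℕ} (hm : ∀ t ∈ S, i ≤ t → m ≤ t) :
    (((m : ℝ) - i : ℝ) : EReal) ≤ tval S i :=
  le_iInf₂ fun d hd => EReal.coe_le_coe_iff.mpr <| by
    have : (m : ℝ) ≤ i + d := by exact_mod_cast hm _ hd (Nat.le_add_right i d)
    linarith

lemma tval_eq_top (h : ∀ t ∈ S, t < i) : tval S i = ⊤ :=
  iInf₂_eq_top.mpr fun d hd => absurd (h _ hd) (by omega)

variable {a : ℕ → ℤ}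

lemma tterm_eq {s : ℕ} (hs : s ∈ S) (his : i ≤ s) (hnext : ∀ t ∈ S, i ≤ t → s ≤ t) :
    tterm a S i = ((a i + s - i : ℝ) : EReal) := by
  rw [tterm, le_antisymm (tval_le hs his) (le_tval hnext), ← EReal.coe_add, add_sub_assoc]

lemma coe_le_tterm {m : ℕ} (hm : ∀ t ∈ S, m ≤ t) :
    ((a i + m - i : ℝ) : EReal) ≤ tterm a S i := by
  rw [tterm, add_sub_assoc, EReal.coe_add]
  exact add_le_add_right (le_tval fun t ht _ => hm t ht) _

lemma tterm_eq_top (h : ∀ t ∈ S, t < i) : tterm a S i = ⊤ := by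
  rw [tterm, tval_eq_top h]
  exact EReal.coe_add_top _

end Valuation

section Solutions

variable {k : ℕ} {a : ℕ → ℤ} {S : Set ℕ}

lemma tmin_le {l : ℕ} (hl : l ≤ k) : tmin k a S ≤ tterm a S l :=
  iInf₂_le l (Finset.mem_range.mpr (Nat.lt_succ_of_le hl))

lemma tmin_eq {c : EReal} {i : ℕ} (hi : i ≤ k) (hc : tterm a S i = c)
    (hle : ∀ l ≤ k, c ≤ tterm a S l) : tmin k a S = c :=
  le_antisymm (hc ▸ tmin_le hi)
    (le_iInf₂ fun l hl => hle l (Nat.lt_succ_iff.mp (Finset.mem_range.mp hl)))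

lemma isSol_of_eq {c : EReal} {i j : ℕ} (hi : i ≤ k) (hj : j ≤ k) (hij : i ≠ j)
    (hci : tterm a S i = c) (hcj : tterm a S j = c) (hle : ∀ l ≤ k, c ≤ tterm a S l) :
    IsSol k a S := by
  have hmin := tmin_eq hi hci hle
  exact ⟨i, Finset.mem_range.mpr (Nat.lt_succ_of_le hi), j,
    Finset.mem_range.mpr (Nat.lt_succ_of_le hj), hij, hci.trans hmin.symm, hcj.trans hmin.symm⟩

lemma not_isSol_of_lt {i₀ : ℕ} (hi₀ : i₀ ≤ k)
    (hlt : ∀ l ≤ k, l ≠ i₀ → tterm a S i₀ < tterm a S l) : ¬ IsSol k a S := by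
  rintro ⟨i, hi, j, hj, hij, hie, hje⟩
  have hattained : ∀ l ∈ Finset.range (k + 1), tterm a S l = tmin k a S → l = i₀ := by
    intro l hl he
    by_contra hne
    exact (hlt l (Nat.lt_succ_iff.mp (Finset.mem_range.mp hl)) hne).not_ge (he ▸ tmin_le hi₀)
  exact hij ((hattained i hi hie).trans (hattained j hj hje).symm)

theorem not_isSol_of_forall_lt (h : ∀ i, 1 ≤ i → i ≤ k → a 0 < a i - i) (hS : S.Nonempty) :
    ¬ IsSol k a S := by
  have hmS : sInf S ∈ S := Nat.sInf_mem hS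
  have hm : ∀ t ∈ S, sInf S ≤ t := fun t ht => Nat.sInf_le ht
  refine not_isSol_of_lt (Nat.zero_le k) fun l hl hl0 => ?_
  rw [tterm_eq hmS (Nat.zero_le _) fun t ht _ => hm t ht]
  refine lt_of_lt_of_le (EReal.coe_lt_coe_iff.mpr ?_) (coe_le_tterm hm)
  have : (a 0 : ℝ) < a l - l := by exact_mod_cast h l (by omega) hl
  push_cast
  linarith

lemma isSol_singleton {j : ℕ} (hj : 1 ≤ j) (hjk : j ≤ k) (hlow : ∀ i ≤ j, a 0 ≤ a i - i)
    (heq : a j - j = a 0) : IsSol k a {j} := by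
  have hnext : ∀ i ≤ j, ∀ t ∈ ({j} : Set ℕ), i ≤ t → j ≤ t := by simp
  have hterm : ∀ i ≤ j, tterm a {j} i = ((a i + j - i : ℝ) : EReal) :=
    fun i hi => tterm_eq rfl hi (hnext i hi)
  refine isSol_of_eq (c := ((a 0 + j : ℝ) : EReal)) (Nat.zero_le k) hjk (by omega)
    (by simp [hterm 0 (Nat.zero_le j)]) ?_ ?_
  · have : (a j : ℝ) - j = a 0 := by exact_mod_cast heq
    rw [hterm j le_rfl]
    congr 1
    linarith
  · intro l hl
    rcases le_or_gt l j with hlj | hjl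
    · rw [hterm l hlj]
      have : (a 0 : ℝ) ≤ a l - l := by exact_mod_cast hlow l hlj
      exact EReal.coe_le_coe_iff.mpr (by linarith)
    · rw [tterm_eq_top (by simpa using hjl)]
      exact le_top

lemma exists_upper_point (p : ℕ) {j : ℕ} (hpj : p < j) (hjk : j ≤ k) (hj : a j ≤ a 0 + p) :
    ∃ x t : ℕ, p < t ∧ t ≤ x ∧ t ≤ k ∧ a t + x - t = a 0 + p ∧
      ∀ i, p < i → i ≤ x → i ≤ k → a 0 + p ≤ a i + x - i := by
  classical
  set C := (Finset.Ioc p k).filter fun i => a i ≤ a 0 + p with hC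
  have hmemC : ∀ i, i ∈ C ↔ (p < i ∧ i ≤ k) ∧ a i ≤ a 0 + p := by simp [hC]
  obtain ⟨t, htC, htmax⟩ :=
    C.exists_max_image (fun i => a 0 + p - a i + i) ⟨j, (hmemC j).mpr ⟨⟨hpj, hjk⟩, hj⟩⟩
  obtain ⟨⟨hpt, htk⟩, hta⟩ := (hmemC t).mp htC
  refine ⟨(a 0 + p - a t + t).toNat, t, hpt, by omega, htk, by omega, fun i hpi hix hik => ?_⟩
  by_cases hi : a i ≤ a 0 + p
  · have := htmax i ((hmemC i).mpr ⟨⟨hpi, hik⟩, hi⟩)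
    omega
  · omega

lemma isSol_pair {p x t : ℕ} (hlow : ∀ i ≤ p, a 0 ≤ a i - i) (hpt : p < t) (htx : t ≤ x)
    (htk : t ≤ k) (ht : a t + x - t = a 0 + p)
    (hup : ∀ i, p < i → i ≤ x → i ≤ k → a 0 + p ≤ a i + x - i) : IsSol k a {p, x} := by
  have hlow' : ∀ i ≤ p, tterm a {p, x} i = ((a i + p - i : ℝ) : EReal) :=
    fun i hi => tterm_eq (by simp) hi (by simp; omega)
  have hup' : ∀ i, p < i → i ≤ x → tterm a {p, x} i = ((a i + x - i : ℝ) : EReal) :=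
    fun i hpi hix => tterm_eq (by simp) hix (by simp; omega)
  refine isSol_of_eq (c := ((a 0 + p : ℝ) : EReal)) (Nat.zero_le k) htk (by omega)
    (by simp [hlow' 0 (Nat.zero_le p)]) ?_ ?_
  · rw [hup' t hpt htx]
    exact_mod_cast ht
  · intro l hl
    rcases le_or_gt l p with hlp | hpl
    · rw [hlow' l hlp]
      have : (a 0 : ℝ) ≤ a l - l := by exact_mod_cast hlow l hlp
      exact EReal.coe_le_coe_iff.mpr (by linarith)
    rcases le_or_gt l x with hlx | hxl
    · rw [hup' l hpl hlx]
      exact_mod_cast hup l hpl hlx hl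
    · rw [tterm_eq_top (by simp; omega)]
      exact le_top

theorem exists_isSol_of_le {j : ℕ} (hj : 1 ≤ j) (hjk : j ≤ k) (h : a j - j ≤ a 0) :
    ∃ S : Set ℕ, S.Nonempty ∧ IsSol k a S := by
  classical
  have hex : ∃ j, 1 ≤ j ∧ a j - j ≤ a 0 := ⟨j, hj, h⟩
  obtain ⟨hj₀, hj₀a⟩ := Nat.find_spec hex
  have hj₀k : Nat.find hex ≤ k := (Nat.find_min' hex ⟨hj, h⟩).trans hjk
  have hlow : ∀ i < Nat.find hex, a 0 ≤ a i - i := by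
    intro i hi
    rcases i.eq_zero_or_pos with rfl | hi0
    · simp
    · exact le_of_not_ge fun hlt => Nat.find_min hex hi ⟨hi0, hlt⟩
  rcases hj₀a.eq_or_lt with heq | hlt
  · refine ⟨_, Set.singleton_nonempty _, isSol_singleton hj₀ hj₀k (fun i hi => ?_) heq⟩
    rcases hi.lt_or_eq with hi | rfl
    exacts [hlow i hi, heq.ge]
  · obtain ⟨x, t, hpt, htx, htk, ht, hup⟩ :=
      exists_upper_point (a := a) (Nat.find hex - 1) (by omega) hj₀k (by omega)
    exact ⟨_, by simp, isSol_pair (fun i hi => hlow i (by omega)) hpt htx htk ht hup⟩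

end Solutions

theorem stmt6_general (k : ℕ) (a : ℕ → ℤ) :
    (¬ ∃ S : Set ℕ, S.Nonempty ∧ IsSol k a S) ↔
      ∀ i : ℕ, 1 ≤ i → i ≤ k → a 0 < a i - i := by
  constructor
  · intro hno i hi hik
    by_contra! hle
    exact hno (exists_isSol_of_le hi hik hle)
  · rintro h ⟨S, hS, hsol⟩
    exact not_isSol_of_forall_lt h hS hsol

/-- no nonempty tropical solution iff `a_i - i > a_0` for `1 ≤ i ≤ k`. -/
theorem stmt6 (k : ℕ) (hk : 1 ≤ k) (a : ℕ → ℤ) :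
    (¬ ∃ S : Set ℕ, S.Nonempty ∧ IsSol k a S) ↔
      ∀ i : ℕ, 1 ≤ i → i ≤ k → a 0 < a i - i :=
  stmt6_general k a
end

section
/- The tropical linear differential equation P = min_{0≤i≤k}{u^(i)} (all coefficients a_i = 0) has exactly the sets {j, l} with 0 ≤ j < l ≤ k as its minimal tropical solutions; in particular it has k(k+1)/2 minimal solutions. -/
section tval

variable {S : Set ℕ} {i : ℕ}

lemma tval_le_s13 {d : ℕ} (h : i + d ∈ S) : tval S i ≤ ((d : ℝ) : EReal) :=
  iInf₂_le d h

lemma le_tval_s13 {c : EReal} (h : ∀ d : ℕ, i + d ∈ S → c ≤ ((d : ℝ) : EReal)) : c ≤ tval S i :=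
  le_iInf₂ h

lemma tval_nonneg : 0 ≤ tval S i :=
  le_tval_s13 fun d _ => by exact_mod_cast d.zero_le

lemma tval_eq_zero_iff : tval S i = 0 ↔ i ∈ S := by
  refine ⟨fun h => ?_, fun h => le_antisymm (by simpa using tval_le_s13 (d := 0) h) tval_nonneg⟩
  by_contra hi
  have hone : (1 : EReal) ≤ tval S i := le_tval_s13 fun d hd => by
    have : d ≠ 0 := by rintro rfl; exact hi hd
    exact_mod_cast Nat.one_le_iff_ne_zero.2 this
  rw [h] at hone
  exact absurd hone (by norm_num)

lemma tval_eq_sInf_sub (hS : S.Nonempty) (hi : i ≤ sInf S) :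
    tval S i = (((sInf S - i : ℕ) : ℝ) : EReal) := by
  refine le_antisymm (tval_le_s13 (by rw [Nat.add_sub_cancel' hi]; exact Nat.sInf_mem hS))
    (le_tval_s13 fun d hd => ?_)
  have := Nat.sInf_le hd
  exact_mod_cast (by omega : sInf S - i ≤ d)

lemma tval_injOn_Iic_sInf (hS : S.Nonempty) : Set.InjOn (tval S) (Set.Iic (sInf S)) := by
  intro i hi j hj h
  rw [tval_eq_sInf_sub hS hi, tval_eq_sInf_sub hS hj] at h
  have : sInf S - i = sInf S - j := by exact_mod_cast h
  simp only [Set.mem_Iic] at hi hj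
  omega

end tval

section zeroCoefficients

variable {k : ℕ} {S : Set ℕ}

lemma tterm_zero (S : Set ℕ) (i : ℕ) : tterm (fun _ => 0) S i = tval S i := by
  simp [tterm]

lemma tmin_zero_eq_zero {p : ℕ} (hpk : p ≤ k) (hp : p ∈ S) : tmin k (fun _ => 0) S = 0 := by
  refine le_antisymm ?_ (le_iInf₂ fun i _ => by rw [tterm_zero]; exact tval_nonneg)
  calc tmin k (fun _ => 0) S ≤ tterm (fun _ => 0) S p :=
        iInf₂_le p (Finset.mem_range.2 (Nat.lt_succ_of_le hpk))
    _ = 0 := by rw [tterm_zero, tval_eq_zero_iff.2 hp]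

lemma isSol_zero_iff (hS : S.Nonempty) :
    IsSol k (fun _ => 0) S ↔ ∃ p ∈ S, ∃ q ∈ S, p ≠ q ∧ p ≤ k ∧ q ≤ k := by
  constructor
  · rintro ⟨i, hi, j, hj, hij, hti, htj⟩
    rw [Finset.mem_range, Nat.lt_succ_iff] at hi hj
    by_cases hmeet : ∃ p ∈ S, p ≤ k
    · obtain ⟨p, hp, hpk⟩ := hmeet
      rw [tmin_zero_eq_zero hpk hp, tterm_zero, tval_eq_zero_iff] at hti htj
      exact ⟨i, hti, j, htj, hij, hi, hj⟩
    · have hk : k < sInf S := not_le.1 fun h => hmeet ⟨_, Nat.sInf_mem hS, h⟩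
      refine absurd (tval_injOn_Iic_sInf hS ?_ ?_ ?_) hij
      · exact Set.mem_Iic.2 (by omega)
      · exact Set.mem_Iic.2 (by omega)
      · rw [← tterm_zero, ← tterm_zero, hti, htj]
  · rintro ⟨p, hp, q, hq, hpq, hpk, hqk⟩
    have hmin := tmin_zero_eq_zero hpk hp
    refine ⟨p, Finset.mem_range.2 (by omega), q, Finset.mem_range.2 (by omega), hpq, ?_, ?_⟩
    · rw [hmin, tterm_zero, tval_eq_zero_iff.2 hp]
    · rw [hmin, tterm_zero, tval_eq_zero_iff.2 hq]

lemma isSol_zero_pair {p q : ℕ} (hpq : p ≠ q) (hpk : p ≤ k) (hqk : q ≤ k) :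
    IsSol k (fun _ => 0) {p, q} :=
  (isSol_zero_iff (Set.insert_nonempty p {q})).2 ⟨p, by simp, q, by simp, hpq, hpk, hqk⟩

lemma isMinSol_zero_iff :
    IsMinSol k (fun _ => 0) S ↔ ∃ j l : ℕ, j < l ∧ l ≤ k ∧ S = {j, l} := by
  constructor
  · rintro ⟨hne, hsol, hmin⟩
    obtain ⟨p, hp, q, hq, hpq, hpk, hqk⟩ := (isSol_zero_iff hne).1 hsol
    have hS : S = {p, q} :=
      (hmin {p, q} (Set.insert_subset hp (Set.singleton_subset_iff.2 hq))
        (Set.insert_nonempty p {q}) (isSol_zero_pair hpq hpk hqk)).symm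
    rcases lt_or_gt_of_ne hpq with h | h
    · exact ⟨p, q, h, hqk, hS⟩
    · exact ⟨q, p, h, hpk, hS.trans (Set.pair_comm p q)⟩
  · rintro ⟨j, l, hjl, hlk, rfl⟩
    refine ⟨Set.insert_nonempty j {l}, isSol_zero_pair hjl.ne (by omega) hlk, ?_⟩
    intro T hT hTne hTsol
    obtain ⟨p, hp, q, hq, hpq, -, -⟩ := (isSol_zero_iff hTne).1 hTsol
    refine hT.antisymm fun x hx => ?_
    have hp' := hT hp
    have hq' := hT hq
    simp only [Set.mem_insert_iff, Set.mem_singleton_iff] at hx hp' hq'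
    rcases hx with rfl | rfl <;> rcases hp' with rfl | rfl <;> rcases hq' with rfl | rfl <;>
      first | exact hp | exact hq | exact absurd rfl hpq

end zeroCoefficients

lemma setOf_pairs_eq_image_powersetCard (k : ℕ) :
    {S : Set ℕ | ∃ j l : ℕ, j < l ∧ l ≤ k ∧ S = {j, l}}
      = (fun t : Finset ℕ => (t : Set ℕ)) '' ↑((Finset.range (k + 1)).powersetCard 2) := by
  ext S
  simp only [Set.mem_ofPred_eq, Set.mem_image, Finset.mem_coe, Finset.mem_powersetCard,
    Finset.card_eq_two]
  constructor
  · rintro ⟨j, l, hjl, hlk, rfl⟩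
    refine ⟨{j, l}, ⟨fun x hx => ?_, j, l, hjl.ne, rfl⟩, by simp⟩
    simp only [Finset.mem_insert, Finset.mem_singleton] at hx
    rcases hx with rfl | rfl <;> exact Finset.mem_range.2 (by omega)
  · rintro ⟨t, ⟨ht, a, b, hab, rfl⟩, rfl⟩
    have ha : a < k + 1 := Finset.mem_range.1 (ht (by simp))
    have hb : b < k + 1 := Finset.mem_range.1 (ht (by simp))
    rcases lt_or_gt_of_ne hab with h | h
    · exact ⟨a, b, h, by omega, by simp⟩
    · exact ⟨b, a, h, by omega, by simp [Set.pair_comm a b]⟩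

lemma ncard_setOf_pairs (k : ℕ) :
    {S : Set ℕ | ∃ j l : ℕ, j < l ∧ l ≤ k ∧ S = {j, l}}.ncard = k * (k + 1) / 2 := by
  rw [setOf_pairs_eq_image_powersetCard, Finset.coe_injective.injOn.ncard_image,
    Set.ncard_coe_finset, Finset.card_powersetCard, Finset.card_range, Nat.choose_two_right,
    Nat.add_sub_cancel, Nat.mul_comm]

theorem stmt13_general (k : ℕ) :
    {S : Set ℕ | IsMinSol k (fun _ => 0) S}
        = {S : Set ℕ | ∃ j l : ℕ, j < l ∧ l ≤ k ∧ S = {j, l}} ∧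
      {S : Set ℕ | IsMinSol k (fun _ => 0) S}.ncard = k * (k + 1) / 2 := by
  have hset : {S : Set ℕ | IsMinSol k (fun _ => 0) S}
      = {S : Set ℕ | ∃ j l : ℕ, j < l ∧ l ≤ k ∧ S = {j, l}} :=
    Set.ext fun _ => isMinSol_zero_iff
  exact ⟨hset, hset ▸ ncard_setOf_pairs k⟩

/-- for `P = min_{0 ≤ i ≤ k} {u^(i)}` the minimal tropical
solutions are exactly the sets `{j, l}` with `0 ≤ j < l ≤ k`; in particular
there are `k(k+1)/2` of them. -/
theorem stmt13 (k : ℕ) (hk : 1 ≤ k) :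
    {S : Set ℕ | IsMinSol k (fun _ => 0) S}
        = {S : Set ℕ | ∃ j l : ℕ, j < l ∧ l ≤ k ∧ S = {j, l}} ∧
      {S : Set ℕ | IsMinSol k (fun _ => 0) S}.ncard = k * (k + 1) / 2 :=
  stmt13_general k
end
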